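/- Let Q ∈ ℝ^{N×N} be the matrix of the linear map x ↦ φ[Ux] (truncated DFT of real vectors). Then Q is invertible and Q Qᵀ = Λ², where Λ is the diagonal matrix with Λ_{κκ} = 1 if κ = 0 or (N even and κ = N/2), and Λ_{κκ} = 1/√2 otherwise. -/

import Mathlib

open Complex Matrix

noncomputable def dftMatrix (N : ℕ) : Matrix (Fin N) (Fin N) ℂ :=
  fun κ τ => (1 / Real.sqrt N : ℝ) *
    Complex.exp (-(2 * Real.pi * Complex.I * (κ : ℕ) * (τ : ℕ)) / N)

/-- The coordinate chart extracting the free real/imaginary parts. -/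
noncomputable def phi (N : ℕ) (z : Fin N → ℂ) (j : Fin N) : ℝ :=
  if (j : ℕ) ≤ N / 2 then (z j).re
  else (z ⟨(j : ℕ) - N / 2, lt_of_le_of_lt (Nat.sub_le _ _) j.isLt⟩).im

/-- The diagonal scaling matrix `Λ`, with `Λ_{κκ} = 1` if `κ = 0` or (`N` even and
`κ = N/2`), and `1/√2` otherwise. -/
noncomputable def Lambda (N : ℕ) : Matrix (Fin N) (Fin N) ℝ :=
  Matrix.diagonal fun κ => if (κ : ℕ) = 0 ∨ 2 * (κ : ℕ) = N then 1 else 1 / Real.sqrt 2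

/-!
Write `U = A + iB` with `A = Re U`, `B = Im U`. Unitarity gives `U Uᴴ = 1`, and
`U Uᵀ = P` is the reflection matrix `P_{jk} = [N ∣ j + k]`. Both are real, so comparing real and
imaginary parts yields `A Aᵀ = (1 + P) / 2`, `B Bᵀ = (1 - P) / 2` and `A Bᵀ = 0`. The rows of `Q`
are the rows `0, …, ⌊N/2⌋` of `A` and the rows `1, …, ⌈N/2⌉ - 1` of `B`; on these index ranges `P`
meets the diagonal only at `κ = 0` and `κ = N/2`, which gives `Q Qᵀ = Λ²`, and `det Λ² ≠ 0`.
-/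
theorem IsPrimitiveRoot.sum_zpow_pow_eq_ite {K : Type*} [Field K] {ζ : K} {N : ℕ}
    (hζ : IsPrimitiveRoot ζ N) (m : ℤ) :
    ∑ τ ∈ Finset.range N, (ζ ^ m) ^ τ = if (N : ℤ) ∣ m then (N : K) else 0 := by
  split_ifs with h
  · simp [(hζ.zpow_eq_one_iff_dvd m).mpr h]
  · have hne : ζ ^ m ≠ 1 := fun h1 => h ((hζ.zpow_eq_one_iff_dvd m).mp h1)
    rw [geom_sum_eq hne, ← zpow_natCast, ← _root_.zpow_mul, mul_comm, _root_.zpow_mul, zpow_natCast,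
      hζ.pow_eq_one, _root_.one_zpow, sub_self, zero_div]

lemma dftMatrix_apply_eq_zpow {N : ℕ} (κ τ : Fin N) :
    dftMatrix N κ τ =
      ((√N)⁻¹ : ℝ) * (exp (2 * Real.pi * I / N) ^ (-(κ : ℤ))) ^ (τ : ℕ) := by
  rw [← exp_int_mul, ← exp_nat_mul, dftMatrix, one_div]
  congr 2
  push_cast
  ring

lemma conj_dftMatrix_apply_eq_zpow {N : ℕ} (κ τ : Fin N) :
    starRingEnd ℂ (dftMatrix N κ τ) =
      ((√N)⁻¹ : ℝ) * (exp (2 * Real.pi * I / N) ^ (κ : ℤ)) ^ (τ : ℕ) := by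
  rw [← exp_int_mul, ← exp_nat_mul, dftMatrix, one_div, map_mul, conj_ofReal, ← exp_conj]
  congr 2
  simp only [map_div₀, map_neg, map_mul, conj_I, conj_ofReal, conj_natCast, map_ofNat]
  push_cast
  ring

lemma sum_dft_kernel_mul {N : ℕ} (hN : 0 < N) (a b : ℤ) :
    ∑ τ : Fin N, (((√N)⁻¹ : ℝ) * (exp (2 * Real.pi * I / N) ^ a) ^ (τ : ℕ)) *
      (((√N)⁻¹ : ℝ) * (exp (2 * Real.pi * I / N) ^ b) ^ (τ : ℕ)) =
      if (N : ℤ) ∣ a + b then 1 else 0 := by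
  have hω := isPrimitiveRoot_exp N hN.ne'
  have hc : (((√N)⁻¹ : ℝ) : ℂ) * (((√N)⁻¹ : ℝ) : ℂ) = (N : ℂ)⁻¹ := by
    rw [← ofReal_mul, ← mul_inv, Real.mul_self_sqrt N.cast_nonneg]; push_cast; rfl
  calc _ = (N : ℂ)⁻¹ * ∑ τ ∈ Finset.range N, (exp (2 * Real.pi * I / N) ^ (a + b)) ^ τ := by
        rw [Finset.mul_sum, ← Fin.sum_univ_eq_sum_range]
        refine Finset.sum_congr rfl fun τ _ => ?_
        rw [zpow_add₀ (exp_ne_zero _), mul_pow, ← hc]; ring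
    _ = _ := by
        rw [hω.sum_zpow_pow_eq_ite]
        split_ifs <;> simp [hN.ne']

lemma sum_dftMatrix_mul {N : ℕ} (j k : Fin N) :
    ∑ τ, dftMatrix N j τ * dftMatrix N k τ = if N ∣ (j : ℕ) + k then 1 else 0 := by
  simp_rw [dftMatrix_apply_eq_zpow]
  rw [sum_dft_kernel_mul j.pos]
  refine if_congr ?_ rfl rfl
  rw [← neg_add, Int.dvd_neg]
  exact_mod_cast Int.natCast_dvd_natCast

lemma sum_dftMatrix_mul_conj {N : ℕ} (j k : Fin N) :
    ∑ τ, dftMatrix N j τ * starRingEnd ℂ (dftMatrix N k τ) = if j = k then 1 else 0 := by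
  simp_rw [conj_dftMatrix_apply_eq_zpow, dftMatrix_apply_eq_zpow]
  rw [sum_dft_kernel_mul j.pos]
  refine if_congr ?_ rfl rfl
  rw [neg_add_eq_sub, ← Nat.modEq_iff_dvd]
  exact ⟨fun h => Fin.ext (h.eq_of_lt_of_lt j.isLt k.isLt), fun h => h ▸ rfl⟩

section ComplexVectors

variable {ι : Type*} [Fintype ι] (u v : ι → ℂ)

lemma sum_re_mul_re :
    ∑ i, (u i).re * (v i).re = ((∑ i, u i * starRingEnd ℂ (v i)).re + (∑ i, u i * v i).re) / 2 := by
  simp only [re_sum, ← Finset.sum_add_distrib, Finset.sum_div, mul_re, conj_re, conj_im]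
  exact Finset.sum_congr rfl fun _ _ => by ring

lemma sum_im_mul_im :
    ∑ i, (u i).im * (v i).im = ((∑ i, u i * starRingEnd ℂ (v i)).re - (∑ i, u i * v i).re) / 2 := by
  simp only [re_sum, ← Finset.sum_sub_distrib, Finset.sum_div, mul_re, conj_re, conj_im]
  exact Finset.sum_congr rfl fun _ _ => by ring

lemma sum_re_mul_im :
    ∑ i, (u i).re * (v i).im = ((∑ i, u i * v i).im - (∑ i, u i * starRingEnd ℂ (v i)).im) / 2 := by
  simp only [im_sum, ← Finset.sum_sub_distrib, Finset.sum_div, mul_im, conj_re, conj_im]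
  exact Finset.sum_congr rfl fun _ _ => by ring

end ComplexVectors

section DftGram

variable {N : ℕ} (j k : Fin N)

lemma sum_re_mul_re_dftMatrix :
    ∑ τ, (dftMatrix N j τ).re * (dftMatrix N k τ).re =
      ((if j = k then 1 else 0) + (if N ∣ (j : ℕ) + k then 1 else 0)) / 2 := by
  rw [sum_re_mul_re, sum_dftMatrix_mul_conj, sum_dftMatrix_mul]
  split_ifs <;> simp

lemma sum_im_mul_im_dftMatrix :
    ∑ τ, (dftMatrix N j τ).im * (dftMatrix N k τ).im =
      ((if j = k then 1 else 0) - (if N ∣ (j : ℕ) + k then 1 else 0)) / 2 := by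
  rw [sum_im_mul_im, sum_dftMatrix_mul_conj, sum_dftMatrix_mul]
  split_ifs <;> simp

lemma sum_re_mul_im_dftMatrix :
    ∑ τ, (dftMatrix N j τ).re * (dftMatrix N k τ).im = 0 := by
  rw [sum_re_mul_im, sum_dftMatrix_mul_conj, sum_dftMatrix_mul]
  split_ifs <;> simp

end DftGram

lemma Nat.dvd_add_iff_of_le_half {N j k : ℕ} (hj : j ≤ N / 2) (hk : k ≤ N / 2) :
    N ∣ j + k ↔ j = k ∧ (j = 0 ∨ 2 * j = N) := by
  constructor
  · intro h
    rcases Nat.eq_zero_or_pos (j + k) with h0 | hpos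
    · omega
    · have := Nat.eq_of_dvd_of_lt_two_mul hpos.ne' h (by omega)
      omega
  · rintro ⟨rfl, rfl | h⟩
    · simp
    · exact ⟨1, by omega⟩

section Phi

variable {N : ℕ} (z : Fin N → ℂ) {j : Fin N}

lemma phi_of_le (hj : (j : ℕ) ≤ N / 2) : phi N z j = (z j).re := if_pos hj

lemma phi_of_lt (hj : N / 2 < (j : ℕ)) :
    phi N z j = (z ⟨j - N / 2, lt_of_le_of_lt (Nat.sub_le _ _) j.isLt⟩).im :=
  if_neg (not_le.2 hj)

end Phi

noncomputable def realDftMatrix (N : ℕ) : Matrix (Fin N) (Fin N) ℝ :=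
  of fun j τ => phi N (fun κ => dftMatrix N κ τ) j

lemma eq_realDftMatrix {N : ℕ} {Q : Matrix (Fin N) (Fin N) ℝ}
    (hQ : ∀ x : Fin N → ℝ, Q *ᵥ x = phi N (dftMatrix N *ᵥ fun τ => (x τ : ℂ))) :
    Q = realDftMatrix N := by
  ext j τ
  have hcol := congrFun (hQ (Pi.single τ 1)) j
  have hsingle : (fun τ' => ((Pi.single τ 1 : Fin N → ℝ) τ' : ℂ)) = (Pi.single τ 1 : Fin N → ℂ) :=
    funext fun τ' => by by_cases h : τ' = τ <;> simp [h]
  rwa [mulVec_single_one, hsingle, mulVec_single_one] at hcol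

lemma Lambda_mul_Lambda (N : ℕ) :
    Lambda N * Lambda N =
      diagonal fun κ : Fin N => if (κ : ℕ) = 0 ∨ 2 * (κ : ℕ) = N then 1 else 1 / 2 := by
  rw [Lambda, diagonal_mul_diagonal]
  congr 1
  funext κ
  split_ifs
  · norm_num
  · rw [div_mul_div_comm, one_mul, Real.mul_self_sqrt zero_le_two]

lemma realDftMatrix_mul_transpose (N : ℕ) :
    realDftMatrix N * (realDftMatrix N)ᵀ = Lambda N * Lambda N := by
  ext j k
  rw [Lambda_mul_Lambda, mul_apply, diagonal_apply]
  simp only [transpose_apply, realDftMatrix, of_apply]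
  rcases le_or_gt (j : ℕ) (N / 2) with hj | hj <;> rcases le_or_gt (k : ℕ) (N / 2) with hk | hk
  · simp only [phi_of_le _ hj, phi_of_le _ hk]
    simp only [sum_re_mul_re_dftMatrix, Nat.dvd_add_iff_of_le_half hj hk]
    split_ifs <;> simp_all [Fin.ext_iff]
  · simp only [phi_of_le _ hj, phi_of_lt _ hk]
    rw [sum_re_mul_im_dftMatrix, if_neg (by rintro rfl; omega)]
  · simp only [phi_of_lt _ hj, phi_of_le _ hk, mul_comm (dftMatrix N _ _).im]
    rw [sum_re_mul_im_dftMatrix, if_neg (by rintro rfl; omega)]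
  · simp only [phi_of_lt _ hj, phi_of_lt _ hk]
    rw [sum_im_mul_im_dftMatrix, if_neg (Nat.not_dvd_of_pos_of_lt (by simp; omega) (by simp; omega))]
    split_ifs <;> simp_all [Fin.ext_iff] <;> omega

theorem Q_invertible_and_QQt_general (N : ℕ) (Q : Matrix (Fin N) (Fin N) ℝ)
    (hQ : ∀ x : Fin N → ℝ, Q *ᵥ x = phi N (dftMatrix N *ᵥ fun τ => (x τ : ℂ))) :
    IsUnit Q ∧ Q * Qᵀ = Lambda N * Lambda N := by
  obtain rfl := eq_realDftMatrix hQ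
  have hgram := realDftMatrix_mul_transpose N
  refine ⟨?_, hgram⟩
  have hΛ : IsUnit (Lambda N * Lambda N) := by
    rw [Lambda_mul_Lambda, isUnit_diagonal, Pi.isUnit_iff]
    intro κ
    split_ifs <;> norm_num
  rw [← hgram, isUnit_iff_isUnit_det, det_mul] at hΛ
  exact (isUnit_iff_isUnit_det _).2 (isUnit_of_mul_isUnit_left hΛ)

/-- the matrix `Q` of the truncated DFT `x ↦ φ[Ux]` of real vectors is
invertible and satisfies `Q Qᵀ = Λ²`. -/
theorem Q_invertible_and_QQt (N : ℕ) (hN : 0 < N) (Q : Matrix (Fin N) (Fin N) ℝ)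
    (hQ : ∀ x : Fin N → ℝ, Q *ᵥ x = phi N (dftMatrix N *ᵥ fun τ => (x τ : ℂ))) :
    IsUnit Q ∧ Q * Qᵀ = Lambda N * Lambda N :=
  Q_invertible_and_QQt_general N Q hQ
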